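/- Let β ∈ (0,1), N a positive integer, and μ_i = 1 - β^{r_i}, θ_i = 1 - β^{s_i} for positive integers r_i, s_i, i = 1,…,N. For a subset a ⊆ {1,…,N}, if Σ_{i∈a} r_i ≠ Σ_{i∈a} s_i, then the Bernoulli KL divergence between the products satisfies d(∏_{i∈a}(1-μ_i), ∏_{i∈a}(1-θ_i)) ≥ (2/log 2) · β^{2 Σ_{i∈a} r_i} · (1-β)², where d is the binary KL divergence. -/

import Mathlib

/-!
Pinsker's inequality for Bernoulli laws gives `d(p, q) ≥ (2 / log 2) (p - q)²`, and for distinct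
exponents `R ≠ S` the powers `p = β^R`, `q = β^S` are at least one step `β^R (1 - β)` of the
geometric grid apart.
-/

open Real Set

noncomputable def binaryKL (p q : ℝ) : ℝ :=
  p * log (p / q) + (1 - p) * log ((1 - p) / (1 - q))

/-- Cross entropy of `Bernoulli p` relative to `Bernoulli y` minus the Pinsker term `2 (p - y)²`;
its derivative in `y` has the sign of `y - p`, so it is minimised at `y = p`. -/
noncomputable def pinskerGap (p y : ℝ) : ℝ :=
  -(p * log y) - (1 - p) * log (1 - y) - 2 * (p - y) ^ 2

lemma binaryKL_sub_two_mul_sq {p q : ℝ} (hp : p ∈ Ioo 0 1) (hq : q ∈ Ioo 0 1) :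
    binaryKL p q - 2 * (p - q) ^ 2 = pinskerGap p q - pinskerGap p p := by
  have hp' : 1 - p ≠ 0 := by linarith [hp.2]
  have hq' : 1 - q ≠ 0 := by linarith [hq.2]
  rw [binaryKL, pinskerGap, pinskerGap, log_div hp.1.ne' hq.1.ne', log_div hp' hq']
  ring

lemma hasDerivAt_pinskerGap (p : ℝ) {y : ℝ} (hy : y ∈ Ioo 0 1) :
    HasDerivAt (pinskerGap p) ((y - p) * (2 * y - 1) ^ 2 / (y * (1 - y))) y := by
  have hy0 : y ≠ 0 := hy.1.ne'
  have hy1 : 1 - y ≠ 0 := by linarith [hy.2]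
  have hlog : HasDerivAt (fun y => p * log y) (p * y⁻¹) y :=
    (hasDerivAt_log hy0).const_mul p
  have hlog₁ : HasDerivAt (fun y => (1 - p) * log (1 - y)) ((1 - p) * ((1 - y)⁻¹ * -1)) y :=
    ((hasDerivAt_log hy1).comp y ((hasDerivAt_id y).const_sub 1)).const_mul (1 - p)
  have hsq : HasDerivAt (fun y => 2 * (p - y) ^ 2) (2 * (2 * (p - y) * -1)) y := by
    simpa using (((hasDerivAt_id y).const_sub p).pow 2).const_mul 2
  refine ((hlog.neg.sub hlog₁).sub hsq).congr_deriv ?_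
  rw [eq_div_iff (mul_ne_zero hy0 hy1)]
  field_simp
  ring

lemma pinskerGap_self_le {p q : ℝ} (hp : p ∈ Ioo 0 1) (hq : q ∈ Ioo 0 1) :
    pinskerGap p p ≤ pinskerGap p q := by
  have hderiv : ∀ {D : Set ℝ}, D ⊆ Ioo 0 1 → ∀ x ∈ D,
      HasDerivWithinAt (pinskerGap p) ((x - p) * (2 * x - 1) ^ 2 / (x * (1 - x))) D x :=
    fun hD x hx => (hasDerivAt_pinskerGap p (hD hx)).hasDerivWithinAt
  have hcont : ∀ {D : Set ℝ}, D ⊆ Ioo 0 1 → ContinuousOn (pinskerGap p) D :=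
    fun hD x hx => (hderiv hD x hx).continuousWithinAt
  have hden : ∀ x ∈ Ioo (0 : ℝ) 1, 0 < x * (1 - x) := fun x hx => mul_pos hx.1 (by linarith [hx.2])
  rcases le_total p q with hpq | hqp
  · have hD : Ico p 1 ⊆ Ioo 0 1 := fun x hx => ⟨hp.1.trans_le hx.1, hx.2⟩
    have hmono : MonotoneOn (pinskerGap p) (Ico p 1) := by
      refine monotoneOn_of_hasDerivWithinAt_nonneg (convex_Ico p 1) (hcont hD)
        (fun x hx => hderiv (interior_subset.trans hD) x hx) fun x hx => ?_
      rw [interior_Ico] at hx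
      have := hden x ⟨hp.1.trans hx.1, hx.2⟩
      have : 0 ≤ x - p := by linarith [hx.1]
      positivity
    exact hmono ⟨le_rfl, hp.2⟩ ⟨hpq, hq.2⟩ hpq
  · have hD : Ioc 0 p ⊆ Ioo 0 1 := fun x hx => ⟨hx.1, hx.2.trans_lt hp.2⟩
    have hanti : AntitoneOn (pinskerGap p) (Ioc 0 p) := by
      refine antitoneOn_of_hasDerivWithinAt_nonpos (convex_Ioc 0 p) (hcont hD)
        (fun x hx => hderiv (interior_subset.trans hD) x hx) fun x hx => ?_
      rw [interior_Ioc] at hx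
      have := hden x ⟨hx.1, hx.2.trans hp.2⟩
      exact div_nonpos_of_nonpos_of_nonneg
        (mul_nonpos_of_nonpos_of_nonneg (by linarith [hx.2]) (sq_nonneg _)) this.le
    exact hanti ⟨hq.1, hqp⟩ ⟨hp.1, le_rfl⟩ hqp

theorem two_mul_sq_sub_le_binaryKL {p q : ℝ} (hp : p ∈ Ioo 0 1) (hq : q ∈ Ioo 0 1) :
    2 * (p - q) ^ 2 ≤ binaryKL p q := by
  linarith [binaryKL_sub_two_mul_sq hp hq, pinskerGap_self_le hp hq]

lemma pow_mul_one_sub_le_pow_sub_pow {β : ℝ} (h0 : 0 ≤ β) (h1 : β ≤ 1) {m n : ℕ} (hmn : m < n) :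
    β ^ m * (1 - β) ≤ β ^ m - β ^ n := by
  have : β ^ n ≤ β ^ (m + 1) := pow_le_pow_of_le_one h0 h1 hmn
  rw [pow_succ] at this
  linarith

lemma pow_mul_one_sub_le_abs_pow_sub_pow {β : ℝ} (h0 : 0 ≤ β) (h1 : β ≤ 1) {m n : ℕ}
    (hmn : m ≠ n) : β ^ m * (1 - β) ≤ |β ^ m - β ^ n| := by
  rcases hmn.lt_or_gt with hlt | hgt
  · exact (pow_mul_one_sub_le_pow_sub_pow h0 h1 hlt).trans (le_abs_self _)
  · calc β ^ m * (1 - β) ≤ β ^ n * (1 - β) :=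
          mul_le_mul_of_nonneg_right (pow_le_pow_of_le_one h0 h1 hgt.le) (by linarith)
      _ ≤ β ^ n - β ^ m := pow_mul_one_sub_le_pow_sub_pow h0 h1 hgt
      _ ≤ |β ^ m - β ^ n| := by rw [abs_sub_comm]; exact le_abs_self _

lemma pow_mem_Ioo {β : ℝ} (hβ : β ∈ Ioo 0 1) {n : ℕ} (hn : n ≠ 0) : β ^ n ∈ Ioo 0 1 :=
  ⟨pow_pos hβ.1 n, pow_lt_one₀ hβ.1.le hβ.2 hn⟩

lemma binaryKL_div_log_two (p q : ℝ) :
    p * logb 2 (p / q) + (1 - p) * logb 2 ((1 - p) / (1 - q)) = binaryKL p q / log 2 := by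
  rw [binaryKL, logb, logb]
  ring

theorem max_feedback_kl_lower_bound_general (β : ℝ) (hβ : β ∈ Set.Ioo (0:ℝ) 1)
    (N : ℕ) (r s : Fin N → ℕ)
    (hr : ∀ i, 0 < r i) (hs : ∀ i, 0 < s i)
    (a : Finset (Fin N))
    (hne : (∑ i ∈ a, r i) ≠ (∑ i ∈ a, s i)) :
    (2 / Real.log 2) * β ^ (2 * ∑ i ∈ a, r i) * (1 - β) ^ 2 ≤
      (β ^ (∑ i ∈ a, r i)) * Real.logb 2 ((β ^ (∑ i ∈ a, r i)) / (β ^ (∑ i ∈ a, s i)))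
      + (1 - β ^ (∑ i ∈ a, r i)) *
        Real.logb 2 ((1 - β ^ (∑ i ∈ a, r i)) / (1 - β ^ (∑ i ∈ a, s i))) := by
  have ha : a.Nonempty := Finset.nonempty_iff_ne_empty.2 fun h => hne (by simp [h])
  have hR := pow_mem_Ioo hβ (Finset.sum_pos (fun i _ => hr i) ha).ne'
  have hS := pow_mem_Ioo hβ (Finset.sum_pos (fun i _ => hs i) ha).ne'
  have hgap := pow_mul_one_sub_le_abs_pow_sub_pow hβ.1.le hβ.2.le hne
  have hgap_sq := pow_le_pow_left₀ (mul_nonneg hR.1.le (sub_nonneg.2 hβ.2.le)) hgap 2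
  rw [sq_abs] at hgap_sq
  rw [binaryKL_div_log_two]
  calc 2 / log 2 * β ^ (2 * ∑ i ∈ a, r i) * (1 - β) ^ 2
      = 2 * (β ^ (∑ i ∈ a, r i) * (1 - β)) ^ 2 / log 2 := by ring
    _ ≤ binaryKL (β ^ ∑ i ∈ a, r i) (β ^ ∑ i ∈ a, s i) / log 2 :=
        div_le_div_of_nonneg_right (by linarith [two_mul_sq_sub_le_binaryKL hR hS])
          (log_nonneg one_le_two)

/-- Binary KL divergence (base-2 logs) between products of geometric-grid parameters. -/
theorem max_feedback_kl_lower_bound (β : ℝ) (hβ : β ∈ Set.Ioo (0:ℝ) 1)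
    (N : ℕ) (hN : 0 < N) (r s : Fin N → ℕ)
    (hr : ∀ i, 0 < r i) (hs : ∀ i, 0 < s i)
    (a : Finset (Fin N))
    (hne : (∑ i ∈ a, r i) ≠ (∑ i ∈ a, s i)) :
    (2 / Real.log 2) * β ^ (2 * ∑ i ∈ a, r i) * (1 - β) ^ 2 ≤
      (β ^ (∑ i ∈ a, r i)) * Real.logb 2 ((β ^ (∑ i ∈ a, r i)) / (β ^ (∑ i ∈ a, s i)))
      + (1 - β ^ (∑ i ∈ a, r i)) *
        Real.logb 2 ((1 - β ^ (∑ i ∈ a, r i)) / (1 - β ^ (∑ i ∈ a, s i))) :=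
  max_feedback_kl_lower_bound_general β hβ N r s hr hs a hne
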